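/- Let h = (h₁,...,hₙ) be a sequence of real numbers with n ≥ k > 1. The function f̄(h) = ∑_{i₁,...,i_k} h_{i₁}·h_{i₂}···h_{i_k} = (∑_i h_i)^k is representable as a k-ary permutation-invariant function, but it cannot be written as ∑_{i₁,...,i_{k-1}} g(h_{i₁},...,h_{i_{k-1}}) for any C^k (k-times continuously differentiable) function g : ℝ^{k-1} → ℝ, when n = k. Concretely, for n = k, no C^k function g : ℝ^{k-1} → ℝ satisfies ∑_{i₁,...,i_{k-1} ∈ {1,...,k}} g(h_{i₁},...,h_{i_{k-1}}) = h₁·h₂···h_k for all (h₁,...,h_k) ∈ ℝ^k. -/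

import Mathlib

/-!
Evaluate both sides on the `2^k` vertices `𝟙_s` (`s ⊆ {1,…,k}`) of the unit cube and take the
alternating sum `∑ₛ (-1)^|s| F(𝟙_s)`, the discrete analogue of `∂ᵏ/∂h₁⋯∂hₖ`. On `h₁⋯hₖ` it is
`(-1)^k`, since only `s = univ` contributes. Each summand `h ↦ g(h ∘ σ)` on the left reads only
the `k - 1` coordinates in the range of `σ`, so it is unchanged by toggling a coordinate outside
that range; pairing `s` with `s ∪ {a}` cancels its alternating sum.
-/

open Finset

namespace Finset

lemma sum_neg_one_pow_card_mul_eq_zero {α R : Type*} [Fintype α] [DecidableEq α] [Ring R]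
    (a : α) (G : Finset α → R) (hG : ∀ s, a ∉ s → G (insert a s) = G s) :
    ∑ s, (-1 : R) ^ #s * G s = 0 := by
  have hs : (univ : Finset α) = insert a (univ.erase a) := (insert_erase (mem_univ a)).symm
  rw [← powerset_univ, hs, sum_powerset_insert (notMem_erase a _), ← sum_add_distrib]
  refine sum_eq_zero fun s hs => ?_
  have ha : a ∉ s := fun h => notMem_erase a _ (mem_powerset.1 hs h)
  rw [hG s ha, card_insert_of_notMem ha, pow_succ]
  noncomm_ring

end Finset

section MixedDiff

variable {α R : Type*} [Fintype α] [DecidableEq α]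

def mixedDiff [Ring R] (F : (α → R) → R) : R :=
  ∑ s : Finset α, (-1 : R) ^ #s * F fun i => if i ∈ s then 1 else 0

lemma mixedDiff_sum [Ring R] {ι : Type*} (t : Finset ι) (F : ι → (α → R) → R) :
    mixedDiff (fun x => ∑ j ∈ t, F j x) = ∑ j ∈ t, mixedDiff (F j) := by
  simp only [mixedDiff, mul_sum]
  exact sum_comm

lemma mixedDiff_eq_zero_of_forall_eq [Ring R] (F : (α → R) → R) (a : α)
    (hF : ∀ x y, (∀ i ≠ a, x i = y i) → F x = F y) : mixedDiff F = 0 :=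
  sum_neg_one_pow_card_mul_eq_zero a _ fun s _ =>
    hF _ _ fun i hi => by simp only [mem_insert, hi, false_or]

lemma mixedDiff_comp_eq_zero [Ring R] {β : Type*} (g : (β → R) → R) (σ : β → α)
    (hσ : ¬ Function.Surjective σ) : mixedDiff (fun x => g (x ∘ σ)) = 0 := by
  obtain ⟨a, ha⟩ := not_forall.1 hσ
  refine mixedDiff_eq_zero_of_forall_eq _ a fun x y hxy => congrArg g (funext fun j => ?_)
  exact hxy (σ j) fun h => ha ⟨j, h⟩

lemma mixedDiff_prod [CommRing R] :
    mixedDiff (fun x : α → R => ∏ i, x i) = (-1) ^ Fintype.card α := by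
  rw [mixedDiff, sum_eq_single_of_mem univ (mem_univ _)]
  · simp
  · intro s _ hs
    obtain ⟨i, hi⟩ := not_forall.1 (mt eq_univ_of_forall hs)
    rw [prod_eq_zero (mem_univ i) (if_neg hi), mul_zero]

end MixedDiff

theorem product_not_km1_ary_general (n k : ℕ) (hk : 1 < k) :
    (∃ f : (Fin k → ℝ) → ℝ, ∀ h : Fin n → ℝ,
        ∑ σ : Fin k → Fin n, f (fun j => h (σ j)) = (∑ i : Fin n, h i) ^ k) ∧
      ¬ ∃ g : (Fin (k - 1) → ℝ) → ℝ, ContDiff ℝ (k : ℕ∞) g ∧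
        ∀ h : Fin k → ℝ,
          ∑ σ : Fin (k - 1) → Fin k, g (fun j => h (σ j)) = ∏ i : Fin k, h i := by
  refine ⟨⟨fun v => ∏ j, v j, fun h => (Fintype.sum_pow h k).symm⟩, ?_⟩
  rintro ⟨g, -, hg⟩
  have hprod : mixedDiff (fun h : Fin k → ℝ => ∏ i, h i) = 0 := by
    simp_rw [← hg]
    rw [mixedDiff_sum]
    refine sum_eq_zero fun σ _ => mixedDiff_comp_eq_zero g σ fun hσ => ?_
    have := Fin.le_of_surjective σ hσ
    omega
  rw [mixedDiff_prod] at hprod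
  exact pow_ne_zero _ (neg_ne_zero.2 one_ne_zero) hprod

/-- (∑_i h_i)^k is k-ary representable, but for n = k no C^k function
g : ℝ^{k−1} → ℝ satisfies ∑_{(i₁,…,i_{k−1})∈{1,…,k}^{k−1}} g(h_{i₁},…,h_{i_{k−1}})
= h₁⋯h_k for all h. -/
theorem product_not_km1_ary (n k : ℕ) (hk : 1 < k) (hkn : k ≤ n) :
    (∃ f : (Fin k → ℝ) → ℝ, ∀ h : Fin n → ℝ,
        ∑ σ : Fin k → Fin n, f (fun j => h (σ j)) = (∑ i : Fin n, h i) ^ k) ∧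
      ¬ ∃ g : (Fin (k - 1) → ℝ) → ℝ, ContDiff ℝ (k : ℕ∞) g ∧
        ∀ h : Fin k → ℝ,
          ∑ σ : Fin (k - 1) → Fin k, g (fun j => h (σ j)) = ∏ i : Fin k, h i :=
  product_not_km1_ary_general n k hk
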